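/- arXiv:1105.6022 — 2 statements merged into one kernel-verified Lean document; each statement's English description precedes it below -/
import Mathlib

section
/- Let 1 < q < ∞ and α > 0. There exists a constant C = C(n, q, α) > 0 such that for every z ∈ ℝⁿ with z ≠ 0, ( ∫₀^∞ |t^α ∇_z ∂_t^α p_t(z)|^q dt/t )^{1/q} ≤ C · |z|^{−(n+1)}, where ∇_z denotes the gradient in the z-variable and |·| its Euclidean norm. -/
open MeasureTheory Set
open scoped ENNReal

/-- The Poisson kernel of the upper half-space `ℝ^{n+1}_+`:
`p_t(x) = Γ((n+1)/2) π^{−(n+1)/2} t (t² + |x|²)^{−(n+1)/2}`. -/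
noncomputable def halfSpacePoissonKernel (n : ℕ) (t : ℝ) (x : EuclideanSpace ℝ (Fin n)) : ℝ :=
  Real.Gamma (((n : ℝ) + 1) / 2) / Real.pi ^ (((n : ℝ) + 1) / 2) *
    (t * (t ^ 2 + ‖x‖ ^ 2) ^ (-(((n : ℝ) + 1) / 2)))

/-- The smallest integer strictly greater than `α` (for `α ≥ 0`). -/
noncomputable def mOf (α : ℝ) : ℕ := ⌊α⌋₊ + 1

/-- The fractional derivative in `t` of the Poisson kernel, of order `α > 0`, with `m` the
smallest integer strictly exceeding `α`:
`∂_t^α p_t(x) = (e^{−iπ(m−α)}/Γ(m−α)) ∫₀^∞ ∂_t^m p_{t+s}(x) s^{m−α−1} ds`. -/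
noncomputable def fracKernel (n : ℕ) (α : ℝ) (t : ℝ) (x : EuclideanSpace ℝ (Fin n)) : ℂ :=
  Complex.exp ((↑(-(Real.pi * ((mOf α : ℝ) - α))) : ℂ) * Complex.I) /
      (Real.Gamma ((mOf α : ℝ) - α) : ℂ) *
    ((∫ s in Ioi (0 : ℝ),
        iteratedDeriv (mOf α) (fun r => halfSpacePoissonKernel n r x) (t + s) *
          s ^ ((mOf α : ℝ) - α - 1) : ℝ) : ℂ)

/-- `∂_t^α P_t f(x) = ∫_{ℝⁿ} ∂_t^α p_t(x−y) f(y) dy` for a `B`-valued `f`. -/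
noncomputable def fracPoisson (n : ℕ) {B : Type*} [NormedAddCommGroup B] [NormedSpace ℂ B]
    (α t : ℝ) (f : EuclideanSpace ℝ (Fin n) → B) (x : EuclideanSpace ℝ (Fin n)) : B :=
  ∫ y, fracKernel n α t (x - y) • f y

/-- The fractional Littlewood–Paley `g`-function
`g_α^q(f)(x) = (∫₀^∞ ‖t^α ∂_t^α P_t f(x)‖_B^q dt/t)^{1/q}`, with values in `[0,∞]`. -/
noncomputable def gFun (n : ℕ) {B : Type*} [NormedAddCommGroup B] [NormedSpace ℂ B]
    (q α : ℝ) (f : EuclideanSpace ℝ (Fin n) → B) (x : EuclideanSpace ℝ (Fin n)) : ℝ≥0∞ :=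
  (∫⁻ t in Ioi (0 : ℝ),
      ENNReal.ofReal (‖t ^ α • fracPoisson n α t f x‖ ^ q / t)) ^ (1 / q)

/-- The fractional area function
`S_α^q(f)(x) = (∬_{|x−y|<t} ‖t^α ∂_t^α P_t f(y)‖_B^q dy dt/t^{n+1})^{1/q}`,
with values in `[0,∞]`. -/
noncomputable def areaFun (n : ℕ) {B : Type*} [NormedAddCommGroup B] [NormedSpace ℂ B]
    (q α : ℝ) (f : EuclideanSpace ℝ (Fin n) → B) (x : EuclideanSpace ℝ (Fin n)) : ℝ≥0∞ :=
  (∫⁻ t in Ioi (0 : ℝ), ∫⁻ y in {y | ‖x - y‖ < t},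
      ENNReal.ofReal (‖t ^ α • fracPoisson n α t f y‖ ^ q / t ^ (n + 1))) ^ (1 / q)

/-- The fractional `g*_λ`-function
`g_{λ,α}^{q,*}(f)(x) = (∬_{ℝⁿ×(0,∞)} (t/(t+|x−y|))^{λn} ‖t^α ∂_t^α P_t f(y)‖_B^q
dy dt/t^{n+1})^{1/q}`, with values in `[0,∞]`. -/
noncomputable def gStarFun (n : ℕ) {B : Type*} [NormedAddCommGroup B] [NormedSpace ℂ B]
    (q α lam : ℝ) (f : EuclideanSpace ℝ (Fin n) → B) (x : EuclideanSpace ℝ (Fin n)) : ℝ≥0∞ :=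
  (∫⁻ t in Ioi (0 : ℝ), ∫⁻ y,
      ENNReal.ofReal ((t / (t + ‖x - y‖)) ^ (lam * n) *
        ‖t ^ α • fracPoisson n α t f y‖ ^ q / t ^ (n + 1))) ^ (1 / q)

/-!
With `a = |x|²` the Poisson kernel is the profile `K r (r² + a)^(-(n+1)/2)` at `r = t`, and every
`r`- or `a`-derivative of such a profile is again a finite sum of terms `c rⁱ aʲ (r² + a)^(-e)`
with `i + 2j = d`, each bounded by `(r² + a)^(d/2 - e)`. Hence, for `a ≥ |z|²/4`, the
`a`-derivative of `∂ᵣᵐ p` at `r = t + s` is `O((t + s + |z|/2)^(-(n+m+2)))`, and integrating it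
against `s^(m-α-1)` shows that `y ↦ ∂_t^α p_t(y)` is Lipschitz on the ball `|y - z| < |z|/2` with
constant `O((t + |z|/2)^(-(n+2+α)) |z|) = O((t + |z|/2)^(-(n+1+α)))`. The resulting `t`-integral
`∫ t^(αq) (t + |z|/2)^(-(n+1+α)q) dt/t` is a Beta-type integral of size `|z|^(-(n+1)q)`.
-/

theorem pow_mul_pow_le_rpow {r a : ℝ} (hr : 0 ≤ r) (ha : 0 < a) (i j : ℕ) :
    r ^ i * a ^ j ≤ (r ^ 2 + a) ^ (((i : ℝ) + 2 * j) / 2) := by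
  have hs : 0 < r ^ 2 + a := by positivity
  have hri : r ^ i ≤ (r ^ 2 + a) ^ ((i : ℝ) / 2) := by
    calc r ^ i = (r ^ 2) ^ ((i : ℝ) / 2) := by
          rw [← Real.rpow_natCast_mul hr]; push_cast
          rw [mul_div_cancel₀ _ two_ne_zero, Real.rpow_natCast]
      _ ≤ (r ^ 2 + a) ^ ((i : ℝ) / 2) := by gcongr; linarith
  have haj : a ^ j ≤ (r ^ 2 + a) ^ (j : ℝ) := by
    rw [Real.rpow_natCast]; gcongr; nlinarith
  calc r ^ i * a ^ j ≤ (r ^ 2 + a) ^ ((i : ℝ) / 2) * (r ^ 2 + a) ^ (j : ℝ) := by gcongr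
    _ = _ := by rw [← Real.rpow_add hs]; ring_nf

theorem rpow_neg_eq_mul_rpow_neg_add_one {x : ℝ} (hx : 0 < x) (e : ℝ) :
    x ^ (-e) = x * x ^ (-(e + 1)) := by
  rw [show -e = -(e + 1) + 1 by ring, Real.rpow_add_one hx.ne', mul_comm]

theorem rpow_sq_add_sq_le {r w p : ℝ} (hr : 0 ≤ r) (hw : 0 < w) (hp : p ≤ 0) :
    (r ^ 2 + w ^ 2) ^ p ≤ 2 ^ (-p) * (r + w) ^ (2 * p) := by
  have hrw : 0 < r + w := by linarith
  calc (r ^ 2 + w ^ 2) ^ p ≤ ((r + w) ^ 2 / 2) ^ p :=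
        Real.rpow_le_rpow_of_nonpos (by positivity) (by nlinarith [sq_nonneg (r - w)]) hp
    _ = 2 ^ (-p) * (r + w) ^ (2 * p) := by
        rw [Real.div_rpow (by positivity) zero_le_two, Real.rpow_neg zero_le_two,
          Real.rpow_mul hrw.le, Real.rpow_two, div_eq_inv_mul]

section AddRpowIntegral

variable {u δ g s : ℝ}

theorem add_rpow_neg_mul_rpow_le_left (hu : 0 < u) (hg : 0 ≤ g) (hs : 0 < s) :
    (u + s) ^ (-g) * s ^ (δ - 1) ≤ u ^ (-g) * s ^ (δ - 1) :=
  mul_le_mul_of_nonneg_right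
    (Real.rpow_le_rpow_of_nonpos hu (le_add_of_nonneg_right hs.le) (neg_nonpos.2 hg))
    (by positivity)

theorem add_rpow_neg_mul_rpow_le_right (hu : 0 ≤ u) (hg : 0 ≤ g) (hs : 0 < s) :
    (u + s) ^ (-g) * s ^ (δ - 1) ≤ s ^ (δ - 1 - g) := by
  calc (u + s) ^ (-g) * s ^ (δ - 1) ≤ s ^ (-g) * s ^ (δ - 1) :=
        mul_le_mul_of_nonneg_right
          (Real.rpow_le_rpow_of_nonpos hs (le_add_of_nonneg_left hu) (neg_nonpos.2 hg))
          (by positivity)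
    _ = s ^ (δ - 1 - g) := by rw [← Real.rpow_add hs]; ring_nf

theorem integrableOn_add_rpow_neg_mul_rpow (hu : 0 < u) (hδ : 0 < δ) (hδg : δ < g) :
    IntegrableOn (fun s : ℝ => (u + s) ^ (-g) * s ^ (δ - 1)) (Ioi 0) := by
  have hcont : ContinuousOn (fun s : ℝ => (u + s) ^ (-g) * s ^ (δ - 1)) (Ioi 0) :=
    ((continuous_const.add continuous_id).continuousOn.rpow_const
        fun s (hs : 0 < s) => Or.inl (add_pos hu hs).ne').mul
      (continuousOn_id.rpow_const fun s hs => Or.inl (ne_of_gt hs))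
  have hnear : IntegrableOn (fun s : ℝ => (u + s) ^ (-g) * s ^ (δ - 1)) (Ioc 0 u) := by
    refine Integrable.mono'
      (((intervalIntegral.intervalIntegrable_rpow' (r := δ - 1) (by linarith)).1).const_mul
        (u ^ (-g)))
      ((hcont.mono Ioc_subset_Ioi_self).aestronglyMeasurable measurableSet_Ioc) ?_
    refine (ae_restrict_iff' measurableSet_Ioc).2 (ae_of_all _ fun s ⟨hs, _⟩ => ?_)
    rw [Real.norm_of_nonneg (by positivity)]
    exact add_rpow_neg_mul_rpow_le_left hu (by linarith) hs
  have hfar : IntegrableOn (fun s : ℝ => (u + s) ^ (-g) * s ^ (δ - 1)) (Ioi u) := by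
    refine Integrable.mono' (integrableOn_Ioi_rpow_of_lt (by linarith : δ - 1 - g < -1) hu)
      ((hcont.mono (Ioi_subset_Ioi hu.le)).aestronglyMeasurable measurableSet_Ioi) ?_
    refine (ae_restrict_iff' measurableSet_Ioi).2 (ae_of_all _ fun s (hs : u < s) => ?_)
    have hs0 : 0 < s := hu.trans hs
    rw [Real.norm_of_nonneg (by positivity)]
    exact add_rpow_neg_mul_rpow_le_right hu.le (by linarith) hs0
  simpa only [Ioc_union_Ioi_eq_Ioi hu.le] using hnear.union hfar

theorem setIntegral_add_rpow_neg_mul_rpow_le (hu : 0 < u) (hδ : 0 < δ) (hδg : δ < g) :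
    ∫ s in Ioi 0, (u + s) ^ (-g) * s ^ (δ - 1) ≤ (1 / δ + 1 / (g - δ)) * u ^ (δ - g) := by
  have hint := integrableOn_add_rpow_neg_mul_rpow hu hδ hδg
  rw [← Ioc_union_Ioi_eq_Ioi hu.le, setIntegral_union (Ioc_disjoint_Ioi le_rfl) measurableSet_Ioi
    (hint.mono_set Ioc_subset_Ioi_self) (hint.mono_set (Ioi_subset_Ioi hu.le))]
  have hnear : ∫ s in Ioc 0 u, (u + s) ^ (-g) * s ^ (δ - 1) ≤ u ^ (-g) * (u ^ δ / δ) := by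
    calc ∫ s in Ioc 0 u, (u + s) ^ (-g) * s ^ (δ - 1)
        ≤ ∫ s in Ioc 0 u, u ^ (-g) * s ^ (δ - 1) :=
          setIntegral_mono_on (hint.mono_set Ioc_subset_Ioi_self)
            (((intervalIntegral.intervalIntegrable_rpow' (r := δ - 1) (by linarith)).1).const_mul
              _) measurableSet_Ioc fun s hs => add_rpow_neg_mul_rpow_le_left hu (by linarith) hs.1
      _ = u ^ (-g) * (u ^ δ / δ) := by
          rw [integral_const_mul, ← intervalIntegral.integral_of_le hu.le,
            integral_rpow (Or.inl (by linarith)), sub_add_cancel, Real.zero_rpow hδ.ne',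
            sub_zero]
  have hfar : ∫ s in Ioi u, (u + s) ^ (-g) * s ^ (δ - 1) ≤ u ^ (δ - g) / (g - δ) := by
    calc ∫ s in Ioi u, (u + s) ^ (-g) * s ^ (δ - 1) ≤ ∫ s in Ioi u, s ^ (δ - 1 - g) :=
          setIntegral_mono_on (hint.mono_set (Ioi_subset_Ioi hu.le))
            (integrableOn_Ioi_rpow_of_lt (by linarith) hu) measurableSet_Ioi
            fun s (hs : u < s) => add_rpow_neg_mul_rpow_le_right hu.le (by linarith) (hu.trans hs)
      _ = u ^ (δ - g) / (g - δ) := by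
          rw [integral_Ioi_rpow_of_lt (by linarith) hu, show δ - 1 - g + 1 = δ - g by ring,
            neg_div, ← div_neg, neg_sub]
  calc _ ≤ u ^ (-g) * (u ^ δ / δ) + u ^ (δ - g) / (g - δ) := add_le_add hnear hfar
    _ = (1 / δ + 1 / (g - δ)) * u ^ (δ - g) := by
        rw [mul_div_assoc', ← Real.rpow_add hu, neg_add_eq_sub]; ring

end AddRpowIntegral

/-- The alternative `c = 0` admits the vanishing terms, such as `0 · r^(0 - 1)`, that
differentiation produces without respecting the degree condition. -/
inductive IsHomogeneousSum (e d : ℝ) : (ℝ → ℝ → ℝ) → Prop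
  | term (i j : ℕ) (c : ℝ) (h : c = 0 ∨ (i : ℝ) + 2 * j = d) :
      IsHomogeneousSum e d fun r a => c * r ^ i * a ^ j * (r ^ 2 + a) ^ (-e)
  | add {F G : ℝ → ℝ → ℝ} : IsHomogeneousSum e d F → IsHomogeneousSum e d G →
      IsHomogeneousSum e d fun r a => F r a + G r a

namespace IsHomogeneousSum

variable {e d δ : ℝ} {F : ℝ → ℝ → ℝ}

theorem abs_le (hF : IsHomogeneousSum e d F) :
    ∃ C, 0 ≤ C ∧ ∀ r, 0 ≤ r → ∀ a, 0 < a → |F r a| ≤ C * (r ^ 2 + a) ^ (d / 2 - e) := by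
  induction hF with
  | term i j c h =>
    refine ⟨|c|, abs_nonneg c, fun r hr a ha => ?_⟩
    have hs : 0 < r ^ 2 + a := by positivity
    rcases h with rfl | h
    · simp
    calc |c * r ^ i * a ^ j * (r ^ 2 + a) ^ (-e)|
        = |c| * (r ^ i * a ^ j) * (r ^ 2 + a) ^ (-e) := by
          rw [abs_mul, abs_of_pos (Real.rpow_pos_of_pos hs _), abs_mul, abs_mul,
            abs_of_nonneg (by positivity : 0 ≤ r ^ i), abs_of_pos (pow_pos ha j), mul_assoc |c|]
      _ ≤ |c| * (r ^ 2 + a) ^ (d / 2) * (r ^ 2 + a) ^ (-e) := by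
          rw [← h]; gcongr; exact pow_mul_pow_le_rpow hr ha i j
      _ = |c| * (r ^ 2 + a) ^ (d / 2 - e) := by
          rw [mul_assoc, ← Real.rpow_add hs, sub_eq_add_neg]
  | add _ _ ihF ihG =>
    obtain ⟨C₁, hC₁, h₁⟩ := ihF
    obtain ⟨C₂, hC₂, h₂⟩ := ihG
    refine ⟨C₁ + C₂, by positivity, fun r hr a ha => ?_⟩
    calc _ ≤ _ := abs_add_le _ _
      _ ≤ _ := add_le_add (h₁ r hr a ha) (h₂ r hr a ha)
      _ = _ := by ring

theorem hasDerivAt_fst (hF : IsHomogeneousSum e d F) :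
    ∃ F', IsHomogeneousSum (e + 1) (d + 1) F' ∧
      ∀ a, 0 < a → ∀ r, HasDerivAt (fun r => F r a) (F' r a) r := by
  induction hF with
  | term i j c h =>
    refine ⟨fun r a => c * (i - 2 * e) * r ^ (i + 1) * a ^ j * (r ^ 2 + a) ^ (-(e + 1)) +
      c * i * r ^ (i - 1) * a ^ (j + 1) * (r ^ 2 + a) ^ (-(e + 1)), .add (.term _ _ _ ?_)
        (.term _ _ _ ?_), fun a ha r => ?_⟩
    · rcases h with rfl | h
      · simp
      · right; push_cast; linarith
    · rcases Nat.eq_zero_or_pos i with rfl | hi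
      · simp
      rcases h with rfl | h
      · simp
      · right; push_cast [Nat.one_le_iff_ne_zero.mpr hi.ne']; linarith
    · have hs : 0 < r ^ 2 + a := by positivity
      have hpow : HasDerivAt (fun r : ℝ => (r ^ 2 + a) ^ (-e))
          (-e * (r ^ 2 + a) ^ (-e - 1) * (2 * r)) r := by
        have := ((hasDerivAt_pow 2 r).add_const a).rpow_const (p := -e) (Or.inl hs.ne')
        convert this using 1; push_cast; ring
      refine ((((hasDerivAt_pow i r).const_mul c).mul_const (a ^ j)).mul hpow).congr_deriv ?_
      rw [rpow_neg_eq_mul_rpow_neg_add_one hs, show -e - 1 = -(e + 1) by ring]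
      rcases Nat.eq_zero_or_pos i with rfl | hi
      · simp only [Nat.cast_zero, zero_tsub]; ring
      obtain ⟨k, rfl⟩ : ∃ k, i = k + 1 := ⟨i - 1, by omega⟩
      simp only [Nat.add_sub_cancel]; push_cast; ring
  | add _ _ ihF ihG =>
    obtain ⟨F', hF', hdF⟩ := ihF
    obtain ⟨G', hG', hdG⟩ := ihG
    exact ⟨_, hF'.add hG', fun a ha r => (hdF a ha r).add (hdG a ha r)⟩

theorem hasDerivAt_snd (hF : IsHomogeneousSum e d F) :
    ∃ F', IsHomogeneousSum (e + 1) d F' ∧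
      ∀ a, 0 < a → ∀ r, HasDerivAt (fun a => F r a) (F' r a) a := by
  induction hF with
  | term i j c h =>
    refine ⟨fun r a => c * j * r ^ (i + 2) * a ^ (j - 1) * (r ^ 2 + a) ^ (-(e + 1)) +
      c * (j - e) * r ^ i * a ^ j * (r ^ 2 + a) ^ (-(e + 1)), .add (.term _ _ _ ?_)
        (.term _ _ _ ?_), fun a ha r => ?_⟩
    · rcases Nat.eq_zero_or_pos j with rfl | hj
      · simp
      rcases h with rfl | h
      · simp
      · right; push_cast [Nat.one_le_iff_ne_zero.mpr hj.ne']; linarith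
    · rcases h with rfl | h
      · simp
      · exact Or.inr h
    · have hs : 0 < r ^ 2 + a := by positivity
      have hpow : HasDerivAt (fun a : ℝ => (r ^ 2 + a) ^ (-e))
          (-e * (r ^ 2 + a) ^ (-e - 1)) a := by
        have := ((hasDerivAt_id' a).const_add (r ^ 2)).rpow_const (p := -e) (Or.inl hs.ne')
        exact this.congr_deriv (by ring)
      refine (((hasDerivAt_pow j a).const_mul (c * r ^ i)).mul hpow).congr_deriv ?_
      rw [rpow_neg_eq_mul_rpow_neg_add_one hs, show -e - 1 = -(e + 1) by ring]
      rcases Nat.eq_zero_or_pos j with rfl | hj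
      · simp only [Nat.cast_zero, zero_tsub]; ring
      obtain ⟨k, rfl⟩ : ∃ k, j = k + 1 := ⟨j - 1, by omega⟩
      simp only [Nat.add_sub_cancel]; push_cast; ring
  | add _ _ ihF ihG =>
    obtain ⟨F', hF', hdF⟩ := ihF
    obtain ⟨G', hG', hdG⟩ := ihG
    exact ⟨_, hF'.add hG', fun a ha r => (hdF a ha r).add (hdG a ha r)⟩

theorem exists_iteratedDeriv (e K : ℝ) (m : ℕ) :
    ∃ F, IsHomogeneousSum (e + m) (m + 1) F ∧
      ∀ a, 0 < a → iteratedDeriv m (fun r => K * (r * (r ^ 2 + a) ^ (-e))) = fun r => F r a := by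
  induction m with
  | zero =>
    refine ⟨_, .term 1 0 K (.inr (by simp)), fun a _ => ?_⟩
    ext r
    simp only [iteratedDeriv_zero, Nat.cast_zero, add_zero]
    ring
  | succ m ih =>
    obtain ⟨F, hF, hFeq⟩ := ih
    obtain ⟨F', hF', hF'deriv⟩ := hF.hasDerivAt_fst
    refine ⟨F', by convert hF' using 1 <;> push_cast <;> ring, fun a ha => ?_⟩
    rw [iteratedDeriv_succ, hFeq a ha]
    exact funext fun r => (hF'deriv a ha r).deriv

theorem abs_sub_le (hF : IsHomogeneousSum e d F) (hde : d ≤ 2 * e + 2) :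
    ∃ C, 0 ≤ C ∧ ∀ r, 0 ≤ r → ∀ w, 0 < w → ∀ a b, w ^ 2 ≤ a → w ^ 2 ≤ b →
      |F r a - F r b| ≤ C * (r + w) ^ (d - 2 * (e + 1)) * |a - b| := by
  obtain ⟨G, hG, hFG⟩ := hF.hasDerivAt_snd
  obtain ⟨C, hC, hGle⟩ := hG.abs_le
  have hp : d / 2 - (e + 1) ≤ 0 := by linarith
  refine ⟨C * 2 ^ (-(d / 2 - (e + 1))), by positivity, fun r hr w hw a b ha hb => ?_⟩
  have hGbound : ∀ c ∈ Ici (w ^ 2),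
      ‖G r c‖ ≤ C * 2 ^ (-(d / 2 - (e + 1))) * (r + w) ^ (d - 2 * (e + 1)) := by
    intro c (hc : w ^ 2 ≤ c)
    have hc0 : 0 < c := lt_of_lt_of_le (by positivity) hc
    calc ‖G r c‖ ≤ C * (r ^ 2 + c) ^ (d / 2 - (e + 1)) := hGle r hr c (by positivity)
      _ ≤ C * (r ^ 2 + w ^ 2) ^ (d / 2 - (e + 1)) :=
          mul_le_mul_of_nonneg_left
            (Real.rpow_le_rpow_of_nonpos (by positivity) (by linarith) hp) hC
      _ ≤ C * (2 ^ (-(d / 2 - (e + 1))) * (r + w) ^ (2 * (d / 2 - (e + 1)))) := by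
          gcongr; exact rpow_sq_add_sq_le hr hw hp
      _ = _ := by ring_nf
  simpa [Real.norm_eq_abs] using
    (convex_Ici (w ^ 2)).norm_image_sub_le_of_norm_hasDerivWithin_le
      (fun c (hc : w ^ 2 ≤ c) => (hFG c (lt_of_lt_of_le (by positivity) hc) r).hasDerivWithinAt)
      hGbound hb ha

theorem continuous_fst (hF : IsHomogeneousSum e d F) {a : ℝ} (ha : 0 < a) :
    Continuous fun r => F r a := by
  obtain ⟨F', -, hF'⟩ := hF.hasDerivAt_fst
  exact continuous_iff_continuousAt.2 fun r => (hF' a ha r).continuousAt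

theorem integrableOn_comp_add_mul_rpow (hF : IsHomogeneousSum e d F) (hδ : 0 < δ)
    (hδd : δ < 2 * e - d) {t a : ℝ} (ht : 0 < t) (ha : 0 < a) :
    IntegrableOn (fun s => F (t + s) a * s ^ (δ - 1)) (Ioi 0) := by
  obtain ⟨C, hC, hFle⟩ := hF.abs_le
  refine Integrable.mono' ((integrableOn_add_rpow_neg_mul_rpow ht hδ hδd).const_mul C)
    ((((hF.continuous_fst ha).comp (continuous_const_add t)).continuousOn.mul
      (continuousOn_id.rpow_const fun s hs => Or.inl (ne_of_gt hs))).aestronglyMeasurable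
        measurableSet_Ioi) ?_
  refine (ae_restrict_iff' measurableSet_Ioi).2 (ae_of_all _ fun s (hs : 0 < s) => ?_)
  have hts : 0 < t + s := by linarith
  rw [norm_mul, Real.norm_eq_abs, Real.norm_of_nonneg (by positivity), ← mul_assoc]
  refine mul_le_mul_of_nonneg_right ((hFle _ hts.le a ha).trans ?_) (by positivity)
  refine mul_le_mul_of_nonneg_left ?_ hC
  calc ((t + s) ^ 2 + a) ^ (d / 2 - e) ≤ ((t + s) ^ 2) ^ (d / 2 - e) :=
        Real.rpow_le_rpow_of_nonpos (by positivity) (by linarith) (by linarith)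
    _ = (t + s) ^ (-(2 * e - d)) := by
        rw [← Real.rpow_natCast_mul hts.le]; push_cast; ring_nf

theorem abs_setIntegral_sub_le (hF : IsHomogeneousSum e d F) (hδ : 0 < δ)
    (hδd : δ < 2 * e - d) :
    ∃ C, 0 ≤ C ∧ ∀ t, 0 < t → ∀ w, 0 < w → ∀ a b, w ^ 2 ≤ a → w ^ 2 ≤ b →
      |(∫ s in Ioi 0, F (t + s) a * s ^ (δ - 1)) - ∫ s in Ioi 0, F (t + s) b * s ^ (δ - 1)| ≤
        C * (t + w) ^ (δ + d - 2 * (e + 1)) * |a - b| := by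
  obtain ⟨C, hC, hFsub⟩ := hF.abs_sub_le (by linarith)
  have hδg : δ < 2 * (e + 1) - d := by linarith
  refine ⟨C * (1 / δ + 1 / (2 * (e + 1) - d - δ)), ?_, fun t ht w hw a b ha hb => ?_⟩
  · have : 0 < 2 * (e + 1) - d - δ := by linarith
    positivity
  have htw : 0 < t + w := by linarith
  have ha0 : 0 < a := lt_of_lt_of_le (by positivity) ha
  have hb0 : 0 < b := lt_of_lt_of_le (by positivity) hb
  rw [← integral_sub (hF.integrableOn_comp_add_mul_rpow hδ hδd ht ha0)
    (hF.integrableOn_comp_add_mul_rpow hδ hδd ht hb0), ← Real.norm_eq_abs]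
  calc ‖∫ s in Ioi 0, F (t + s) a * s ^ (δ - 1) - F (t + s) b * s ^ (δ - 1)‖
      ≤ ∫ s in Ioi 0, C * |a - b| * ((t + w + s) ^ (-(2 * (e + 1) - d)) * s ^ (δ - 1)) := by
        refine norm_integral_le_of_norm_le
          ((integrableOn_add_rpow_neg_mul_rpow htw hδ hδg).const_mul _)
          ((ae_restrict_iff' measurableSet_Ioi).2 (ae_of_all _ fun s (hs : 0 < s) => ?_))
        rw [← sub_mul, norm_mul, Real.norm_eq_abs, Real.norm_of_nonneg (by positivity)]
        calc |F (t + s) a - F (t + s) b| * s ^ (δ - 1)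
            ≤ C * (t + s + w) ^ (d - 2 * (e + 1)) * |a - b| * s ^ (δ - 1) := by
              gcongr; exact hFsub _ (by positivity) w hw a b ha hb
          _ = _ := by ring_nf
    _ ≤ C * |a - b| *
          ((1 / δ + 1 / (2 * (e + 1) - d - δ)) * (t + w) ^ (δ - (2 * (e + 1) - d))) := by
        rw [integral_const_mul]
        gcongr
        exact setIntegral_add_rpow_neg_mul_rpow_le htw hδ hδg
    _ = _ := by ring_nf

end IsHomogeneousSum

theorem norm_fderiv_le_of_eq_comp_norm_sq {E G : Type*} [NormedAddCommGroup E] [NormedSpace ℝ E]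
    [NormedAddCommGroup G] [NormedSpace ℝ G] {f : E → G} {g : ℝ → G} {z : E} (hz : z ≠ 0)
    {L : ℝ} (hL : 0 ≤ L) (hfg : ∀ y, y ≠ 0 → f y = g (‖y‖ ^ 2))
    (hg : ∀ a b, (‖z‖ / 2) ^ 2 ≤ a → (‖z‖ / 2) ^ 2 ≤ b → ‖g a - g b‖ ≤ L * |a - b|) :
    ‖fderiv ℝ f z‖ ≤ L * (3 * ‖z‖) := by
  have hz0 : 0 < ‖z‖ := norm_pos_iff.2 hz
  refine norm_fderiv_le_of_lip' ℝ (by positivity) ?_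
  filter_upwards [Metric.ball_mem_nhds z (by positivity : 0 < ‖z‖ / 2)] with y hy
  rw [Metric.mem_ball, dist_eq_norm] at hy
  have hzy : ‖z‖ - ‖y‖ ≤ ‖y - z‖ := by simpa [norm_sub_rev] using norm_sub_norm_le z y
  have hyz : ‖y‖ - ‖z‖ ≤ ‖y - z‖ := norm_sub_norm_le y z
  have hy0 : y ≠ 0 := norm_pos_iff.1 (by linarith)
  rw [hfg y hy0, hfg z hz]
  refine (hg _ _ (by gcongr; linarith) (by gcongr; linarith)).trans ?_
  rw [mul_assoc]
  gcongr
  calc |‖y‖ ^ 2 - ‖z‖ ^ 2| = |‖y‖ - ‖z‖| * (‖y‖ + ‖z‖) := by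
        rw [sq_sub_sq, abs_mul, mul_comm, abs_of_nonneg (by positivity : 0 ≤ ‖y‖ + ‖z‖)]
    _ ≤ ‖y - z‖ * (3 * ‖z‖) := by
        gcongr
        · exact abs_norm_sub_norm_le y z
        · linarith
    _ = 3 * ‖z‖ * ‖y - z‖ := by ring

theorem exists_fracKernel_eq (n : ℕ) (α : ℝ) :
    ∃ F, IsHomogeneousSum (((n : ℝ) + 1) / 2 + mOf α) (mOf α + 1) F ∧ ∃ c : ℂ,
      ∀ t y, y ≠ 0 → fracKernel n α t y =
        c * ((∫ s in Ioi 0, F (t + s) (‖y‖ ^ 2) * s ^ ((mOf α : ℝ) - α - 1) : ℝ) : ℂ) := by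
  obtain ⟨F, hF, hFeq⟩ := IsHomogeneousSum.exists_iteratedDeriv (((n : ℝ) + 1) / 2)
    (Real.Gamma (((n : ℝ) + 1) / 2) / Real.pi ^ (((n : ℝ) + 1) / 2)) (mOf α)
  refine ⟨F, hF, Complex.exp ((↑(-(Real.pi * ((mOf α : ℝ) - α))) : ℂ) * Complex.I) /
    (Real.Gamma ((mOf α : ℝ) - α) : ℂ), fun t y hy => ?_⟩
  have hkernel := hFeq (‖y‖ ^ 2) (by positivity)
  simp only [fracKernel, halfSpacePoissonKernel, hkernel]

theorem norm_fderiv_fracKernel_le (n : ℕ) {α : ℝ} (hα : 0 < α) :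
    ∃ C, 0 < C ∧ ∀ z : EuclideanSpace ℝ (Fin n), z ≠ 0 → ∀ t, 0 < t →
      ‖fderiv ℝ (fracKernel n α t) z‖ ≤ C * (t + ‖z‖ / 2) ^ (-((n : ℝ) + 1 + α)) := by
  obtain ⟨F, hF, c, hFc⟩ := exists_fracKernel_eq n α
  have hm : (mOf α : ℝ) = ⌊α⌋₊ + 1 := by simp [mOf]
  have hδ : 0 < (mOf α : ℝ) - α := by rw [hm]; linarith [Nat.lt_floor_add_one α]
  have hδd : (mOf α : ℝ) - α < 2 * (((n : ℝ) + 1) / 2 + mOf α) - (mOf α + 1) := by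
    linarith [(n.cast_nonneg : (0 : ℝ) ≤ n)]
  obtain ⟨C, hC, hFsub⟩ := hF.abs_setIntegral_sub_le hδ hδd
  refine ⟨6 * (‖c‖ * C + 1), by positivity, fun z hz t ht => ?_⟩
  have hz0 : 0 < ‖z‖ := norm_pos_iff.2 hz
  set w := ‖z‖ / 2 with hw_def
  have hw : 0 < w := by positivity
  have hexp : (mOf α : ℝ) - α + (mOf α + 1) - 2 * (((n : ℝ) + 1) / 2 + mOf α + 1) =
      -((n : ℝ) + 1 + α) - 1 := by ring
  have hLip : ∀ a b, w ^ 2 ≤ a → w ^ 2 ≤ b →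
      ‖c * ((∫ s in Ioi 0, F (t + s) a * s ^ ((mOf α : ℝ) - α - 1) : ℝ) : ℂ) -
          c * ((∫ s in Ioi 0, F (t + s) b * s ^ ((mOf α : ℝ) - α - 1) : ℝ) : ℂ)‖ ≤
        ‖c‖ * (C * (t + w) ^ (-((n : ℝ) + 1 + α) - 1)) * |a - b| := by
    intro a b ha hb
    rw [← mul_sub, norm_mul, ← Complex.ofReal_sub, Complex.norm_real, Real.norm_eq_abs,
      mul_assoc, ← hexp]
    exact mul_le_mul_of_nonneg_left (hFsub t ht w hw a b ha hb) (norm_nonneg c)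
  calc ‖fderiv ℝ (fracKernel n α t) z‖
      ≤ ‖c‖ * (C * (t + w) ^ (-((n : ℝ) + 1 + α) - 1)) * (3 * ‖z‖) :=
        norm_fderiv_le_of_eq_comp_norm_sq hz (by positivity) (hFc t) hLip
    _ = 6 * (‖c‖ * C) * ((t + w) ^ (-((n : ℝ) + 1 + α) - 1) * w) := by rw [hw_def]; ring
    _ ≤ 6 * (‖c‖ * C + 1) * ((t + w) ^ (-((n : ℝ) + 1 + α) - 1) * (t + w)) := by
        gcongr
        · linarith
        · linarith
    _ = 6 * (‖c‖ * C + 1) * (t + w) ^ (-((n : ℝ) + 1 + α)) := by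
        rw [← Real.rpow_add_one (by positivity), sub_add_cancel]

theorem rpow_lintegral_le_of_le_rpow_add_neg {q α E w A : ℝ} (hq : 0 < q) (hα : 0 < α)
    (hαE : α < E) (hw : 0 < w) (hA : 0 ≤ A) {f : ℝ → ℝ} (hf0 : ∀ t, 0 < t → 0 ≤ f t)
    (hf : ∀ t, 0 < t → f t ≤ A * (t + w) ^ (-E)) :
    (∫⁻ t in Ioi (0 : ℝ), ENNReal.ofReal ((t ^ α * f t) ^ q / t)) ^ (1 / q) ≤
      ENNReal.ofReal (A * (1 / (α * q) + 1 / (E * q - α * q)) ^ (1 / q) * w ^ (α - E)) := by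
  have hαq : 0 < α * q := by positivity
  have hαEq : α * q < E * q := by gcongr
  set B := 1 / (α * q) + 1 / (E * q - α * q)
  have hB : 0 ≤ B := by
    have : 0 < E * q - α * q := by linarith
    positivity
  have hpoint : ∀ t, 0 < t →
      (t ^ α * f t) ^ q / t ≤ A ^ q * ((w + t) ^ (-(E * q)) * t ^ (α * q - 1)) := by
    intro t ht
    calc (t ^ α * f t) ^ q / t ≤ (t ^ α * (A * (t + w) ^ (-E))) ^ q / t := by
          gcongr
          · exact mul_nonneg (by positivity) (hf0 t ht)
          · exact hf t ht
      _ = A ^ q * ((w + t) ^ (-(E * q)) * t ^ (α * q - 1)) := by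
          rw [Real.mul_rpow (by positivity) (by positivity), Real.mul_rpow hA (by positivity),
            ← Real.rpow_mul ht.le, ← Real.rpow_mul (by positivity), Real.rpow_sub_one ht.ne',
            add_comm w t]
          ring_nf
  have hint := (integrableOn_add_rpow_neg_mul_rpow hw hαq hαEq).const_mul (A ^ q)
  calc (∫⁻ t in Ioi (0 : ℝ), ENNReal.ofReal ((t ^ α * f t) ^ q / t)) ^ (1 / q)
      ≤ (ENNReal.ofReal (∫ t in Ioi 0, A ^ q * ((w + t) ^ (-(E * q)) * t ^ (α * q - 1)))) ^
          (1 / q) := by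
        rw [ofReal_integral_eq_lintegral_ofReal hint ((ae_restrict_iff' measurableSet_Ioi).2
          (ae_of_all _ fun t (ht : 0 < t) => by positivity))]
        exact ENNReal.rpow_le_rpow (setLIntegral_mono' measurableSet_Ioi fun t ht =>
          ENNReal.ofReal_le_ofReal (hpoint t ht)) (by positivity)
    _ ≤ (ENNReal.ofReal (A ^ q * (B * w ^ (α * q - E * q)))) ^ (1 / q) := by
        rw [integral_const_mul]
        gcongr
        exact setIntegral_add_rpow_neg_mul_rpow_le hw hαq hαEq
    _ = ENNReal.ofReal (A * B ^ (1 / q) * w ^ (α - E)) := by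
        rw [ENNReal.ofReal_rpow_of_nonneg (by positivity) (by positivity),
          Real.mul_rpow (by positivity) (by positivity), Real.mul_rpow hB (by positivity),
          ← Real.rpow_mul hA, ← Real.rpow_mul hw.le, mul_one_div_cancel hq.ne', Real.rpow_one,
          ← sub_mul, mul_assoc (α - E), mul_one_div_cancel hq.ne', mul_one, mul_assoc]

theorem stmt_7_general (n : ℕ) (q : ℝ) (hq : 1 < q) (α : ℝ) (hα : 0 < α) :
    ∃ C : ℝ, 0 < C ∧ ∀ z : EuclideanSpace ℝ (Fin n), z ≠ 0 →
      (∫⁻ t in Ioi (0 : ℝ),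
          ENNReal.ofReal ((t ^ α * ‖fderiv ℝ (fracKernel n α t) z‖) ^ q / t)) ^ (1 / q) ≤
        ENNReal.ofReal (C / ‖z‖ ^ (n + 1)) := by
  obtain ⟨A, hA, hfderiv⟩ := norm_fderiv_fracKernel_le n hα
  have hαE : α < (n : ℝ) + 1 + α := by linarith [(n.cast_nonneg : (0 : ℝ) ≤ n)]
  have hB : 0 < 1 / (α * q) + 1 / (((n : ℝ) + 1 + α) * q - α * q) := by
    have : 0 < ((n : ℝ) + 1 + α) * q - α * q := by nlinarith
    positivity
  refine ⟨A * (1 / (α * q) + 1 / (((n : ℝ) + 1 + α) * q - α * q)) ^ (1 / q) * 2 ^ (n + 1),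
    by positivity, fun z hz => ?_⟩
  have hz0 : 0 < ‖z‖ := norm_pos_iff.2 hz
  convert rpow_lintegral_le_of_le_rpow_add_neg (q := q) (w := ‖z‖ / 2) (by linarith) hα hαE
    (by positivity) hA.le (fun t _ => norm_nonneg (fderiv ℝ (fracKernel n α t) z))
    (hfderiv z hz) using 2
  rw [show α - ((n : ℝ) + 1 + α) = -((n + 1 : ℕ) : ℝ) by push_cast; ring,
    Real.rpow_neg (by positivity), Real.rpow_natCast, div_pow, inv_div]
  ring

/-- For `1 < q < ∞` and `α > 0` there is `C = C(n,q,α) > 0` such that for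
every `z ≠ 0`, `(∫₀^∞ |t^α ∇_z ∂_t^α p_t(z)|^q dt/t)^{1/q} ≤ C |z|^{−(n+1)}`, where `∇_z` is
the (Fréchet) gradient in `z` and `|·|` its norm. -/
theorem stmt_7 (n : ℕ) (hn : 1 ≤ n) (q : ℝ) (hq : 1 < q) (α : ℝ) (hα : 0 < α) :
    ∃ C : ℝ, 0 < C ∧ ∀ z : EuclideanSpace ℝ (Fin n), z ≠ 0 →
      (∫⁻ t in Ioi (0 : ℝ),
          ENNReal.ofReal ((t ^ α * ‖fderiv ℝ (fracKernel n α t) z‖) ^ q / t)) ^ (1 / q) ≤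
        ENNReal.ofReal (C / ‖z‖ ^ (n + 1)) :=
  stmt_7_general n q hq α hα
end

section
/- Let 1 < q < ∞ and α > 0. There exists a constant C = C(n, q, α) > 0 such that for all x, z ∈ ℝⁿ with x ≠ z, ( ∬_{Γ(0)} |t^α ∂_t^α p_t(x + y − z)|^q dy dt / t^{n+1} )^{1/q} ≤ C · |x − z|^{−n}, where Γ(0) = {(y,t) ∈ ℝⁿ × (0,∞) : |y| < t} is the standard cone with vertex 0. -/
open MeasureTheory Set
open scoped ENNReal

/-!
The `m`-th `t`-derivative of the Poisson kernel is a combination of the terms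
`t ^ (2k+1-m) * (t² + |x|²) ^ (-(n+1)/2 - k)` with `2k + 1 ≥ m`, each of which is bounded by
`(t + |x|) ^ (-(n+m))`. Integrating against `s ^ (m-α-1)`, split at `s = t + |x|`, gives
`|∂_t^α p_t(x)| ≲ (t + |x|) ^ (-(n+α))`. On the cone `|y| < t` one has
`t + |x + y - z| ≥ (t + |x - z|) / 2`, so the inner integral is
`≲ t ^ (αq-1) (t + |x-z|) ^ (-(n+α)q)`, and the same splitting of the `t`-integral at
`t = |x - z|` bounds it by `|x - z| ^ (-nq)`.
-/

/-- `∂ₜᵐ (t * (t² + r²) ^ (-β)) = ∑ₖ powDerivCoeff β m k * t ^ (2k+1-m) * (t² + r²) ^ (-β-k)`;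
the recursion is what differentiating each term gives (`hasDerivAt_powDerivTerm`). -/
noncomputable def powDerivCoeff (β : ℝ) : ℕ → ℕ → ℝ
  | 0, 0 => 1
  | 0, _ + 1 => 0
  | m + 1, 0 => (1 - m) * powDerivCoeff β m 0
  | m + 1, k + 1 =>
      (2 * k + 3 - m) * powDerivCoeff β m (k + 1) - 2 * (β + k) * powDerivCoeff β m k

lemma powDerivCoeff_eq_zero_of_lt (β : ℝ) : ∀ {m k : ℕ}, m < k → powDerivCoeff β m k = 0
  | 0, _ + 1, _ => rfl
  | m + 1, k + 1, h => by
    simp [powDerivCoeff, powDerivCoeff_eq_zero_of_lt β (show m < k + 1 by omega),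
      powDerivCoeff_eq_zero_of_lt β (show m < k by omega)]

lemma powDerivCoeff_eq_zero_of_two_mul_add_one_lt (β : ℝ) :
    ∀ {m k : ℕ}, 2 * k + 1 < m → powDerivCoeff β m k = 0
  | m + 1, 0, h => by
    obtain rfl | hm := eq_or_lt_of_le (show 1 ≤ m by omega)
    · simp [powDerivCoeff]
    · simp [powDerivCoeff, powDerivCoeff_eq_zero_of_two_mul_add_one_lt β (k := 0) hm]
  | m + 1, k + 1, h => by
    have hk : powDerivCoeff β m k = 0 :=
      powDerivCoeff_eq_zero_of_two_mul_add_one_lt β (by omega)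
    obtain rfl | hm := eq_or_lt_of_le (show 2 * (k + 1) + 1 ≤ m by omega)
    · simp only [powDerivCoeff, hk]
      push_cast
      ring
    · simp [powDerivCoeff, hk, powDerivCoeff_eq_zero_of_two_mul_add_one_lt β hm]

lemma sum_powDerivCoeff_succ (β : ℝ) (m : ℕ) (g : ℕ → ℝ) :
    ∑ k ∈ Finset.range (m + 1),
        powDerivCoeff β m k * ((2 * k + 1 - m) * g k - 2 * (β + k) * g (k + 1)) =
      ∑ k ∈ Finset.range (m + 2), powDerivCoeff β (m + 1) k * g k := by
  have htel := Finset.sum_range_sub' (fun k => powDerivCoeff β m k * (2 * k + 1 - m) * g k) (m + 1)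
  rw [powDerivCoeff_eq_zero_of_lt β (Nat.lt_succ_self m)] at htel
  rw [Finset.sum_range_succ' _ (m + 1)]
  have hsum : ∑ k ∈ Finset.range (m + 1),
        powDerivCoeff β m k * ((2 * k + 1 - m) * g k - 2 * (β + k) * g (k + 1)) -
      ∑ k ∈ Finset.range (m + 1), powDerivCoeff β (m + 1) (k + 1) * g (k + 1) =
      ∑ k ∈ Finset.range (m + 1), (powDerivCoeff β m k * (2 * k + 1 - m) * g k -
        powDerivCoeff β m (k + 1) * (2 * (k + 1 : ℕ) + 1 - m) * g (k + 1)) := by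
    rw [← Finset.sum_sub_distrib]
    refine Finset.sum_congr rfl fun k _ => ?_
    simp only [powDerivCoeff]
    push_cast
    ring
  rw [show powDerivCoeff β (m + 1) 0 = (1 - m) * powDerivCoeff β m 0 from rfl]
  push_cast at htel hsum ⊢
  linear_combination hsum + htel

noncomputable def powDerivTerm (β : ℝ) (m k : ℕ) (r t : ℝ) : ℝ :=
  t ^ (2 * (k : ℤ) + 1 - m) * (t ^ 2 + r ^ 2) ^ (-β - k)

lemma hasDerivAt_powDerivTerm (β : ℝ) (m k : ℕ) (r : ℝ) {t : ℝ} (ht : 0 < t) :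
    HasDerivAt (powDerivTerm β m k r)
      ((2 * k + 1 - m) * powDerivTerm β (m + 1) k r t -
        2 * (β + k) * powDerivTerm β (m + 1) (k + 1) r t) t := by
  have hpow : HasDerivAt (fun s : ℝ => s ^ (2 * (k : ℤ) + 1 - m))
      ((2 * k + 1 - m) * t ^ (2 * (k : ℤ) + 1 - m - 1)) t := by
    refine (hasDerivAt_zpow (2 * (k : ℤ) + 1 - m) t (Or.inl ht.ne')).congr_deriv ?_
    push_cast
    ring
  have hrpow : HasDerivAt (fun s : ℝ => (s ^ 2 + r ^ 2) ^ (-β - k))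
      (2 * t * (-β - k) * (t ^ 2 + r ^ 2) ^ (-β - k - 1)) t := by
    convert ((hasDerivAt_pow 2 t).add_const (r ^ 2)).rpow_const
      (p := -β - k) (Or.inl (by positivity)) using 1
    norm_num
  refine (hpow.mul hrpow).congr_deriv ?_
  simp only [powDerivTerm]
  have hsucc : t ^ (2 * ((k + 1 : ℕ) : ℤ) + 1 - ((m + 1 : ℕ) : ℤ)) =
      t ^ (2 * (k : ℤ) + 1 - m - 1) * t ^ 2 := by
    rw [← zpow_natCast, ← zpow_add₀ ht.ne']
    push_cast
    congr 1
    ring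
  have hpred : t ^ (2 * (k : ℤ) + 1 - m) = t ^ (2 * (k : ℤ) + 1 - m - 1) * t := by
    rw [← zpow_add_one₀ ht.ne', sub_add_cancel]
  rw [hsucc, hpred,
    show (2 * (k : ℤ) + 1 - ((m + 1 : ℕ) : ℤ)) = 2 * (k : ℤ) + 1 - m - 1 by push_cast; ring,
    show -β - ((k + 1 : ℕ) : ℝ) = -β - k - 1 by push_cast; ring]
  ring

lemma iteratedDeriv_mul_rpow_eq_sum (β r : ℝ) (m : ℕ) {t : ℝ} (ht : 0 < t) :
    iteratedDeriv m (fun s => s * (s ^ 2 + r ^ 2) ^ (-β)) t =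
      ∑ k ∈ Finset.range (m + 1), powDerivCoeff β m k * powDerivTerm β m k r t := by
  induction m generalizing t with
  | zero => simp [powDerivCoeff, powDerivTerm]
  | succ m ih =>
    have hev : iteratedDeriv m (fun s => s * (s ^ 2 + r ^ 2) ^ (-β)) =ᶠ[nhds t]
        fun s => ∑ k ∈ Finset.range (m + 1), powDerivCoeff β m k * powDerivTerm β m k r s :=
      Filter.eventually_of_mem (Ioi_mem_nhds ht) fun s hs => ih hs
    rw [iteratedDeriv_succ, hev.deriv_eq, (HasDerivAt.fun_sum fun k _ =>
      (hasDerivAt_powDerivTerm β m k r ht).const_mul (powDerivCoeff β m k)).deriv]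
    exact sum_powDerivCoeff_succ β m _

lemma powDerivTerm_nonneg (β : ℝ) (m k : ℕ) (r : ℝ) {t : ℝ} (ht : 0 < t) :
    0 ≤ powDerivTerm β m k r t :=
  mul_nonneg (zpow_nonneg ht.le _) (Real.rpow_nonneg (by positivity) _)

lemma powDerivTerm_le {β r t : ℝ} {m k : ℕ} (hβ : 0 ≤ β) (hmk : m ≤ 2 * k + 1) (hr : 0 ≤ r)
    (ht : 0 < t) : powDerivTerm β m k r t ≤ 2 ^ (β + k) * (t + r) ^ (1 - 2 * β - m) := by
  have htr : 0 < t + r := by linarith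
  have hpow : t ^ (2 * (k : ℤ) + 1 - m) ≤ (t + r) ^ ((2 * k + 1 - m : ℕ) : ℝ) := by
    rw [show 2 * (k : ℤ) + 1 - m = ((2 * k + 1 - m : ℕ) : ℤ) by omega, zpow_natCast,
      Real.rpow_natCast]
    exact pow_le_pow_left₀ ht.le (by linarith) _
  have hbase : (t + r) ^ 2 / 2 ≤ t ^ 2 + r ^ 2 := by nlinarith [sq_nonneg (t - r)]
  have hrpow : (t ^ 2 + r ^ 2) ^ (-β - k) ≤ 2 ^ (β + k) * (t + r) ^ (-2 * (β + k)) := by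
    calc (t ^ 2 + r ^ 2) ^ (-β - k) ≤ ((t + r) ^ 2 / 2) ^ (-β - k) :=
          Real.rpow_le_rpow_of_nonpos (by positivity) hbase (by linarith [k.cast_nonneg (α := ℝ)])
      _ = 2 ^ (β + k) * (t + r) ^ (-2 * (β + k)) := by
          rw [Real.div_rpow (by positivity) zero_le_two, ← Real.rpow_natCast,
            ← Real.rpow_mul htr.le, div_eq_mul_inv, ← Real.rpow_neg zero_le_two]
          ring_nf
  calc powDerivTerm β m k r t
      ≤ (t + r) ^ ((2 * k + 1 - m : ℕ) : ℝ) * (2 ^ (β + k) * (t + r) ^ (-2 * (β + k))) :=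
        mul_le_mul hpow hrpow (Real.rpow_nonneg (by positivity) _) (by positivity)
    _ = 2 ^ (β + k) * (t + r) ^ (1 - 2 * β - m) := by
        rw [mul_left_comm, ← Real.rpow_add htr]
        congr 2
        push_cast [hmk]
        ring

lemma exists_abs_iteratedDeriv_mul_rpow_le {β : ℝ} (hβ : 0 ≤ β) (m : ℕ) :
    ∃ C, 0 < C ∧ ∀ r t : ℝ, 0 ≤ r → 0 < t →
      |iteratedDeriv m (fun s => s * (s ^ 2 + r ^ 2) ^ (-β)) t| ≤
        C * (t + r) ^ (1 - 2 * β - m) := by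
  refine ⟨∑ k ∈ Finset.range (m + 1), |powDerivCoeff β m k| * 2 ^ (β + k) + 1, by positivity, ?_⟩
  intro r t hr ht
  rw [iteratedDeriv_mul_rpow_eq_sum β r m ht, add_mul, one_mul, Finset.sum_mul]
  refine (Finset.abs_sum_le_sum_abs _ _).trans (le_add_of_le_of_nonneg
    (Finset.sum_le_sum fun k _ => ?_) (Real.rpow_nonneg (by positivity) _))
  rw [abs_mul, abs_of_nonneg (powDerivTerm_nonneg β m k r ht), mul_assoc]
  rcases lt_or_ge (2 * k + 1) m with hkm | hkm
  · rw [powDerivCoeff_eq_zero_of_two_mul_add_one_lt β hkm, abs_zero, zero_mul, zero_mul]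
  · exact mul_le_mul_of_nonneg_left (powDerivTerm_le hβ hkm hr ht) (abs_nonneg _)

lemma exists_abs_iteratedDeriv_halfSpacePoissonKernel_le (n m : ℕ) :
    ∃ C, 0 < C ∧ ∀ (x : EuclideanSpace ℝ (Fin n)) (t : ℝ), 0 < t →
      |iteratedDeriv m (fun s => halfSpacePoissonKernel n s x) t| ≤
        C * (t + ‖x‖) ^ (-((n : ℝ) + m)) := by
  obtain ⟨C, hC, hbound⟩ :=
    exists_abs_iteratedDeriv_mul_rpow_le (β := ((n : ℝ) + 1) / 2) (by positivity) m
  set A := Real.Gamma (((n : ℝ) + 1) / 2) / Real.pi ^ (((n : ℝ) + 1) / 2)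
  have hA : 0 < A := by positivity
  refine ⟨A * C, by positivity, fun x t ht => ?_⟩
  have hexp : 1 - 2 * (((n : ℝ) + 1) / 2) - m = -((n : ℝ) + m) := by ring
  simp only [halfSpacePoissonKernel]
  rw [iteratedDeriv_const_mul_field, abs_mul, abs_of_pos hA, mul_assoc, ← hexp]
  exact mul_le_mul_of_nonneg_left (hbound ‖x‖ t (norm_nonneg x) ht) hA.le

lemma lintegral_Ioc_rpow_sub_one {a R : ℝ} (ha : 0 < a) (hR : 0 ≤ R) :
    ∫⁻ s in Ioc 0 R, ENNReal.ofReal (s ^ (a - 1)) = ENNReal.ofReal (R ^ a / a) := by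
  have hint : IntegrableOn (fun s : ℝ => s ^ (a - 1)) (Ioc 0 R) := by
    rw [← intervalIntegrable_iff_integrableOn_Ioc_of_le hR]
    exact intervalIntegral.intervalIntegrable_rpow' (by linarith)
  rw [← ofReal_integral_eq_lintegral_ofReal hint
    (ae_restrict_of_forall_mem measurableSet_Ioc fun s hs => Real.rpow_nonneg hs.1.le _),
    ← intervalIntegral.integral_of_le hR, integral_rpow (Or.inl (by linarith)),
    sub_add_cancel, Real.zero_rpow ha.ne', sub_zero]

lemma lintegral_Ioi_rpow_neg_sub_one {b R : ℝ} (hb : 0 < b) (hR : 0 < R) :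
    ∫⁻ s in Ioi R, ENNReal.ofReal (s ^ (-b - 1)) = ENNReal.ofReal (R ^ (-b) / b) := by
  rw [← ofReal_integral_eq_lintegral_ofReal (integrableOn_Ioi_rpow_of_lt (by linarith) hR)
    (ae_restrict_of_forall_mem measurableSet_Ioi fun s hs =>
      Real.rpow_nonneg (hR.trans hs).le _),
    integral_Ioi_rpow_of_lt (by linarith) hR, sub_add_cancel, div_neg, neg_div, neg_neg]

/-- The left side equals `B(a, b) R ^ (-b)` (a Beta integral); splitting at `s = R` gives this. -/
lemma lintegral_Ioi_rpow_mul_rpow_add_le {a b R : ℝ} (ha : 0 < a) (hb : 0 < b) (hR : 0 < R) :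
    ∫⁻ s in Ioi 0, ENNReal.ofReal (s ^ (a - 1) * (s + R) ^ (-(a + b))) ≤
      ENNReal.ofReal ((1 / a + 1 / b) * R ^ (-b)) := by
  have hexp : -(a + b) ≤ 0 := by linarith
  have hnear : ∀ s ∈ Ioc 0 R, ENNReal.ofReal (s ^ (a - 1) * (s + R) ^ (-(a + b))) ≤
      ENNReal.ofReal (R ^ (-(a + b))) * ENNReal.ofReal (s ^ (a - 1)) := fun s hs => by
    rw [← ENNReal.ofReal_mul (by positivity), mul_comm (R ^ _)]
    refine ENNReal.ofReal_le_ofReal (mul_le_mul_of_nonneg_left ?_ (Real.rpow_nonneg hs.1.le _))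
    exact Real.rpow_le_rpow_of_nonpos hR (by linarith [hs.1]) hexp
  have hfar : ∀ s ∈ Ioi R, ENNReal.ofReal (s ^ (a - 1) * (s + R) ^ (-(a + b))) ≤
      ENNReal.ofReal (s ^ (-b - 1)) := fun s hs => by
    have hs0 : 0 < s := hR.trans hs
    refine ENNReal.ofReal_le_ofReal ?_
    calc s ^ (a - 1) * (s + R) ^ (-(a + b)) ≤ s ^ (a - 1) * s ^ (-(a + b)) :=
          mul_le_mul_of_nonneg_left (Real.rpow_le_rpow_of_nonpos hs0 (by linarith) hexp)
            (Real.rpow_nonneg hs0.le _)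
      _ = s ^ (-b - 1) := by rw [← Real.rpow_add hs0]; ring_nf
  rw [← Ioc_union_Ioi_eq_Ioi hR.le, lintegral_union measurableSet_Ioi Ioc_disjoint_Ioi_same]
  calc _ ≤ ENNReal.ofReal (R ^ (-(a + b))) * ENNReal.ofReal (R ^ a / a) +
        ENNReal.ofReal (R ^ (-b) / b) := by
        gcongr
        · rw [← lintegral_Ioc_rpow_sub_one ha hR.le,
            ← lintegral_const_mul' _ _ ENNReal.ofReal_ne_top]
          exact setLIntegral_mono' measurableSet_Ioc hnear
        · rw [← lintegral_Ioi_rpow_neg_sub_one hb hR]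
          exact setLIntegral_mono' measurableSet_Ioi hfar
    _ = ENNReal.ofReal ((1 / a + 1 / b) * R ^ (-b)) := by
        rw [← ENNReal.ofReal_mul (by positivity), ← ENNReal.ofReal_add (by positivity)
          (by positivity)]
        congr 1
        have hRa : R ^ (-(a + b)) * R ^ a = R ^ (-b) := by rw [← Real.rpow_add hR]; ring_nf
        field_simp
        rw [← hRa]
        ring

lemma abs_integral_Ioi_mul_rpow_le {g : ℝ → ℝ} {C R γ b : ℝ} (hC : 0 ≤ C) (hγ : 0 < γ)
    (hb : 0 < b) (hR : 0 < R) (hg : ∀ s, 0 < s → |g s| ≤ C * (s + R) ^ (-(γ + b))) :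
    |∫ s in Ioi 0, g s * s ^ (γ - 1)| ≤ C * (1 / γ + 1 / b) * R ^ (-b) := by
  have hpt : ∀ s ∈ Ioi (0 : ℝ), ENNReal.ofReal ‖g s * s ^ (γ - 1)‖ ≤
      ENNReal.ofReal C * ENNReal.ofReal (s ^ (γ - 1) * (s + R) ^ (-(γ + b))) := fun s hs => by
    have hs : (0 : ℝ) < s := hs
    rw [← ENNReal.ofReal_mul hC, Real.norm_eq_abs, abs_mul,
      abs_of_nonneg (Real.rpow_nonneg hs.le _)]
    refine ENNReal.ofReal_le_ofReal ?_
    calc |g s| * s ^ (γ - 1) ≤ C * (s + R) ^ (-(γ + b)) * s ^ (γ - 1) :=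
          mul_le_mul_of_nonneg_right (hg s hs) (Real.rpow_nonneg hs.le _)
      _ = C * (s ^ (γ - 1) * (s + R) ^ (-(γ + b))) := by ring
  rw [← Real.norm_eq_abs]
  refine (norm_integral_le_lintegral_norm _).trans
    (ENNReal.toReal_le_of_le_ofReal (by positivity) ?_)
  calc ∫⁻ s in Ioi 0, ENNReal.ofReal ‖g s * s ^ (γ - 1)‖
      ≤ ∫⁻ s in Ioi 0, ENNReal.ofReal C * ENNReal.ofReal (s ^ (γ - 1) * (s + R) ^ (-(γ + b))) :=
        setLIntegral_mono' measurableSet_Ioi hpt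
    _ = ENNReal.ofReal C * ∫⁻ s in Ioi 0, ENNReal.ofReal (s ^ (γ - 1) * (s + R) ^ (-(γ + b))) :=
        lintegral_const_mul' _ _ ENNReal.ofReal_ne_top
    _ ≤ ENNReal.ofReal C * ENNReal.ofReal ((1 / γ + 1 / b) * R ^ (-b)) := by
        gcongr
        exact lintegral_Ioi_rpow_mul_rpow_add_le hγ hb hR
    _ = ENNReal.ofReal (C * (1 / γ + 1 / b) * R ^ (-b)) := by
        rw [← ENNReal.ofReal_mul hC, mul_assoc]

lemma mOf_sub_pos (α : ℝ) : 0 < (mOf α : ℝ) - α := by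
  have := Nat.lt_floor_add_one α
  simp only [mOf]
  push_cast
  linarith

lemma norm_fracKernel (n : ℕ) (α t : ℝ) (w : EuclideanSpace ℝ (Fin n)) :
    ‖fracKernel n α t w‖ =
      |∫ s in Ioi 0, iteratedDeriv (mOf α) (fun r => halfSpacePoissonKernel n r w) (t + s) *
          s ^ ((mOf α : ℝ) - α - 1)| / Real.Gamma ((mOf α : ℝ) - α) := by
  rw [fracKernel, norm_mul, norm_div, Complex.norm_exp, Complex.norm_real, Complex.norm_real,
    Real.norm_eq_abs, Real.norm_eq_abs, abs_of_pos (Real.Gamma_pos_of_pos (mOf_sub_pos α))]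
  simp [div_eq_inv_mul]

lemma exists_norm_fracKernel_le (n : ℕ) {α : ℝ} (hα : 0 < α) :
    ∃ K, 0 < K ∧ ∀ (t : ℝ) (w : EuclideanSpace ℝ (Fin n)), 0 < t →
      ‖fracKernel n α t w‖ ≤ K * (t + ‖w‖) ^ (-((n : ℝ) + α)) := by
  obtain ⟨C, hC, hbound⟩ := exists_abs_iteratedDeriv_halfSpacePoissonKernel_le n (mOf α)
  have hγ := mOf_sub_pos α
  have hΓ := Real.Gamma_pos_of_pos hγ
  refine ⟨C * (1 / ((mOf α : ℝ) - α) + 1 / (n + α)) / Real.Gamma ((mOf α : ℝ) - α),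
    by positivity, fun t w ht => ?_⟩
  rw [norm_fracKernel, div_mul_eq_mul_div, div_le_div_iff_of_pos_right hΓ]
  refine abs_integral_Ioi_mul_rpow_le hC.le hγ (by positivity) (by positivity) fun s hs => ?_
  convert hbound w (t + s) (by positivity) using 3 <;> ring

lemma rpow_neg_add_norm_add_le {E : Type*} [SeminormedAddCommGroup E] {e t : ℝ} {v y : E}
    (he : 0 ≤ e) (hy : ‖y‖ < t) : (t + ‖v + y‖) ^ (-e) ≤ 2 ^ e * (t + ‖v‖) ^ (-e) := by
  have ht : 0 < t := (norm_nonneg y).trans_lt hy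
  have hv : ‖v‖ ≤ ‖v + y‖ + ‖y‖ := by simpa using norm_sub_le (v + y) y
  calc (t + ‖v + y‖) ^ (-e) ≤ ((t + ‖v‖) / 2) ^ (-e) :=
        Real.rpow_le_rpow_of_nonpos (by positivity) (by linarith [norm_nonneg (v + y)])
          (by linarith)
    _ = 2 ^ e * (t + ‖v‖) ^ (-e) := by
        rw [Real.div_rpow (by positivity) zero_le_two, Real.rpow_neg zero_le_two, div_inv_eq_mul,
          mul_comm]

lemma lintegral_cone_fracKernel_le {n : ℕ} {α q K : ℝ} (hα : 0 ≤ α) (hq : 0 ≤ q) (hK₀ : 0 ≤ K)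
    (hK : ∀ (t : ℝ) (w : EuclideanSpace ℝ (Fin n)), 0 < t →
      ‖fracKernel n α t w‖ ≤ K * (t + ‖w‖) ^ (-((n : ℝ) + α)))
    (x z : EuclideanSpace ℝ (Fin n)) {t : ℝ} (ht : 0 < t) :
    ∫⁻ y in {y : EuclideanSpace ℝ (Fin n) | ‖y‖ < t},
        ENNReal.ofReal ((t ^ α * ‖fracKernel n α t (x + y - z)‖) ^ q / t ^ (n + 1)) ≤
      ENNReal.ofReal ((volume (Metric.ball (0 : EuclideanSpace ℝ (Fin n)) 1)).toReal *
        (K * 2 ^ ((n : ℝ) + α)) ^ q * (t ^ (α * q - 1) * (t + ‖x - z‖) ^ (-(α * q + n * q)))) := by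
  set d := ‖x - z‖
  set K' := K * 2 ^ ((n : ℝ) + α)
  have hd : 0 ≤ d := norm_nonneg _
  have hcone : {y : EuclideanSpace ℝ (Fin n) | ‖y‖ < t} = Metric.ball 0 t := by
    ext y
    simp
  have hpt : ∀ y ∈ {y : EuclideanSpace ℝ (Fin n) | ‖y‖ < t},
      ENNReal.ofReal ((t ^ α * ‖fracKernel n α t (x + y - z)‖) ^ q / t ^ (n + 1)) ≤
        ENNReal.ofReal ((t ^ α * (K' * (t + d) ^ (-((n : ℝ) + α)))) ^ q / t ^ (n + 1)) := by
    intro y hy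
    have hkernel : ‖fracKernel n α t (x + y - z)‖ ≤ K' * (t + d) ^ (-((n : ℝ) + α)) := by
      rw [add_sub_right_comm, mul_assoc]
      exact (hK t _ ht).trans (mul_le_mul_of_nonneg_left
        (rpow_neg_add_norm_add_le (by positivity) hy) hK₀)
    gcongr
  have hvol : volume {y : EuclideanSpace ℝ (Fin n) | ‖y‖ < t} = ENNReal.ofReal (t ^ n *
      (volume (Metric.ball (0 : EuclideanSpace ℝ (Fin n)) 1)).toReal) := by
    rw [hcone, Measure.addHaar_ball_of_pos _ _ ht, finrank_euclideanSpace_fin,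
      ENNReal.ofReal_mul (by positivity), ENNReal.ofReal_toReal measure_ball_lt_top.ne]
  refine (setLIntegral_mono' (hcone ▸ measurableSet_ball) hpt).trans ?_
  rw [setLIntegral_const, hvol, ← ENNReal.ofReal_mul (by positivity)]
  refine le_of_eq (congrArg ENNReal.ofReal ?_)
  have htd : 0 < t + d := by positivity
  rw [Real.mul_rpow (by positivity) (by positivity), Real.mul_rpow (by positivity) (by positivity),
    ← Real.rpow_mul ht.le, ← Real.rpow_mul htd.le, ← Real.rpow_natCast, ← Real.rpow_natCast,
    Real.rpow_sub_one ht.ne', Nat.cast_add, Nat.cast_one, Real.rpow_add_one ht.ne']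
  field_simp
  ring_nf

/-- For `1 < q < ∞` and `α > 0` there is `C = C(n,q,α) > 0` such that for
all `x ≠ z`, `(∬_{Γ(0)} |t^α ∂_t^α p_t(x+y−z)|^q dy dt/t^{n+1})^{1/q} ≤ C |x−z|^{−n}`, where
`Γ(0) = {(y,t) : |y| < t}` is the standard cone with vertex `0`. -/
theorem stmt_8 (n : ℕ) (hn : 1 ≤ n) (q : ℝ) (hq : 1 < q) (α : ℝ) (hα : 0 < α) :
    ∃ C : ℝ, 0 < C ∧ ∀ x z : EuclideanSpace ℝ (Fin n), x ≠ z →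
      (∫⁻ t in Ioi (0 : ℝ), ∫⁻ y in {y : EuclideanSpace ℝ (Fin n) | ‖y‖ < t},
          ENNReal.ofReal
            ((t ^ α * ‖fracKernel n α t (x + y - z)‖) ^ q / t ^ (n + 1))) ^ (1 / q) ≤
        ENNReal.ofReal (C / ‖x - z‖ ^ n) := by
  obtain ⟨K, hK₀, hK⟩ := exists_norm_fracKernel_le n hα
  have hq₀ : 0 < q := by linarith
  have hnq : 0 < (n : ℝ) * q := mul_pos (by exact_mod_cast hn) hq₀
  have hV : 0 < (volume (Metric.ball (0 : EuclideanSpace ℝ (Fin n)) 1)).toReal :=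
    ENNReal.toReal_pos (Metric.measure_ball_pos _ _ one_pos).ne' measure_ball_lt_top.ne
  set A := (volume (Metric.ball (0 : EuclideanSpace ℝ (Fin n)) 1)).toReal *
    (K * 2 ^ ((n : ℝ) + α)) ^ q
  set B := 1 / (α * q) + 1 / (n * q)
  refine ⟨(A * B) ^ (1 / q), by positivity, fun x z hxz => ?_⟩
  have hd : 0 < ‖x - z‖ := norm_pos_iff.2 (sub_ne_zero.2 hxz)
  calc _ ≤ (∫⁻ t in Ioi 0, ENNReal.ofReal A *
          ENNReal.ofReal (t ^ (α * q - 1) * (t + ‖x - z‖) ^ (-(α * q + n * q)))) ^ (1 / q) := by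
        refine ENNReal.rpow_le_rpow (setLIntegral_mono' measurableSet_Ioi fun t ht => ?_)
          (by positivity)
        rw [← ENNReal.ofReal_mul (by positivity)]
        exact lintegral_cone_fracKernel_le hα.le hq₀.le hK₀.le hK x z ht
    _ ≤ (ENNReal.ofReal A * ENNReal.ofReal (B * ‖x - z‖ ^ (-(n * q)))) ^ (1 / q) := by
        rw [lintegral_const_mul' _ _ ENNReal.ofReal_ne_top]
        gcongr
        exact lintegral_Ioi_rpow_mul_rpow_add_le (by positivity) hnq hd
    _ = ENNReal.ofReal ((A * B) ^ (1 / q) / ‖x - z‖ ^ n) := by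
        rw [← ENNReal.ofReal_mul (by positivity), ENNReal.ofReal_rpow_of_nonneg (by positivity)
          (by positivity), ← mul_assoc, Real.mul_rpow (by positivity) (by positivity),
          ← Real.rpow_mul hd.le, ← Real.rpow_natCast,
          show -(n * q) * (1 / q) = -(n : ℝ) by field_simp, Real.rpow_neg hd.le, ← div_eq_mul_inv]
end
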